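/- arXiv:2506.00012 — 3 statements merged into one kernel-verified Lean document; each statement's English description precedes it below -/
import Mathlib

section
/- For integers N, m, k, r with 0 ≤ r < m < N, r ≤ k, k - r ≤ N - m - 1, and k ≤ N - 1, the identity m·C(m-1,r)·C(N-m,k-r) / (m·C(m-1,r)·C(N-m,k-r) + (N-m)·C(m,r)·C(N-m-1,k-r)) = (m-r)/(N-k) holds, where C denotes the binomial coefficient. -/
theorem stmt_1 (N m k r : ℕ) (hrm : r < m) (hmN : m < N) (hrk : r ≤ k)
    (hkr : k - r ≤ N - m - 1) (hkN : k ≤ N - 1) :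
    ((m : ℚ) * (Nat.choose (m - 1) r) * (Nat.choose (N - m) (k - r)))
      / ((m : ℚ) * (Nat.choose (m - 1) r) * (Nat.choose (N - m) (k - r))
          + ((N : ℚ) - m) * (Nat.choose m r) * (Nat.choose (N - m - 1) (k - r)))
    = ((m : ℚ) - r) / ((N : ℚ) - k) := by
  have hrm' : r ≤ m := hrm.le
  have hkm : k - r ≤ N - m := le_trans hkr (Nat.sub_le _ 1)
  have hkN' : k < N := by omega
  -- identity 1 : m * C(m-1, r) = (m - r) * C(m, r)
  have h1 : (m : ℚ) * ((m - 1).choose r) = ((m : ℚ) - r) * (m.choose r) := by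
    have h := Nat.choose_mul_succ_eq (m - 1) r
    rw [Nat.sub_add_cancel (by omega : 1 ≤ m)] at h
    have h' := congrArg (Nat.cast : ℕ → ℚ) h
    push_cast [Nat.cast_sub hrm'] at h'
    linarith
  -- identity 2 : (N - m) * C(N-m-1, k-r) = (N - m - k + r) * C(N-m, k-r)
  have h2 : ((N : ℚ) - m) * ((N - m - 1).choose (k - r))
      = ((N : ℚ) - m - k + r) * ((N - m).choose (k - r)) := by
    have h := Nat.choose_mul_succ_eq (N - m - 1) (k - r)
    rw [Nat.sub_add_cancel (by omega : 1 ≤ N - m)] at h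
    have h' := congrArg (Nat.cast : ℕ → ℚ) h
    push_cast [Nat.cast_sub hkm, Nat.cast_sub hrk, Nat.cast_sub hmN.le] at h'
    linarith
  have hca : (0 : ℚ) < m.choose r := by exact_mod_cast Nat.choose_pos hrm'
  have hcb : (0 : ℚ) < (N - m).choose (k - r) := by exact_mod_cast Nat.choose_pos hkm
  have hc : ((m.choose r : ℚ) * ((N - m).choose (k - r))) ≠ 0 := by positivity
  have hnum : (m : ℚ) * ((m - 1).choose r) * ((N - m).choose (k - r))
      = ((m : ℚ) - r) * ((m.choose r : ℚ) * ((N - m).choose (k - r))) := by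
    linear_combination (((N - m).choose (k - r) : ℚ)) * h1
  have hden : (m : ℚ) * ((m - 1).choose r) * ((N - m).choose (k - r))
        + ((N : ℚ) - m) * (m.choose r) * ((N - m - 1).choose (k - r))
      = ((N : ℚ) - k) * ((m.choose r : ℚ) * ((N - m).choose (k - r))) := by
    linear_combination (((N - m).choose (k - r) : ℚ)) * h1 + ((m.choose r : ℚ)) * h2
  rw [hden, hnum, mul_div_mul_right _ _ hc]
end

section
/- In the generalized Monty Hall problem with a random host (N doors, m prizes, host randomly opens k doors among the N-1 unchosen doors, revealing exactly r prizes), the probability of winning by staying equals the probability of winning by switching; both equal (m-r)/(N-k). -/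
/-!
Fix the set `B` of opened doors. The swap of two doors outside `B` preserves both the number of
prizes and the number of prizes behind `B`, so every unopened door, door `0` included, hides a
prize in the same number `T_B` of prize configurations of the event. Counting prizes behind the
`N - k` unopened doors then gives `(N - k) T = (m - r) #E` for `T = ∑ T_B`, and counting those
behind the `N - k - 1` doors one may switch to gives `(N - k - 1) T`: switching wins with the
same probability `T / #E` as staying.
-/

open Finset

variable {α : Type*} [DecidableEq α]

theorem card_filter_mem_apply_eq {F : Finset (Finset α)} (σ : Equiv.Perm α)
    (hF : ∀ A, A.map σ.toEmbedding ∈ F ↔ A ∈ F) (x : α) :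
    #{A ∈ F | σ x ∈ A} = #{A ∈ F | x ∈ A} := by
  symm
  refine card_equiv σ.finsetCongr fun A => ?_
  simp [Equiv.finsetCongr_apply, hF]

theorem sum_card_inter_eq_card_mul {F : Finset (Finset α)} {C : Finset α} {x₀ : α}
    (hF : ∀ x ∈ C, ∀ A, A.map (Equiv.swap x x₀).toEmbedding ∈ F ↔ A ∈ F) :
    ∑ A ∈ F, #(C ∩ A) = #C * #{A ∈ F | x₀ ∈ A} :=
  sum_card_inter fun x hx => by
    simpa using card_filter_mem_apply_eq (Equiv.swap x x₀) (hF x hx) x₀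

theorem map_swap_eq_self {B : Finset α} {x y : α} (hx : x ∉ B) (hy : y ∉ B) :
    B.map (Equiv.swap x y).toEmbedding = B := by
  ext z
  rw [mem_map_equiv, Equiv.symm_swap, Equiv.swap_apply_def]
  split_ifs <;> simp_all

theorem sum_filter_product_eq_sum_sum {β γ M : Type*} [AddCommMonoid M] (s : Finset β)
    (t : Finset γ) (p : β × γ → Prop) [DecidablePred p] (f : β × γ → M) :
    ∑ x ∈ s ×ˢ t with p x, f x = ∑ b ∈ t, ∑ a ∈ s with p (a, b), f (a, b) := by
  simp only [sum_filter, sum_product_right]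

variable [Fintype α]

theorem map_mem_filter_card_inter_iff {B : Finset α} {σ : Equiv.Perm α}
    (hB : B.map σ.toEmbedding = B) (m r : ℕ) (A : Finset α) :
    A.map σ.toEmbedding ∈ ({A ∈ univ.powersetCard m | #(A ∩ B) = r} : Finset (Finset α)) ↔
      A ∈ ({A ∈ univ.powersetCard m | #(A ∩ B) = r} : Finset (Finset α)) := by
  conv_lhs => rw [← hB]
  simp [← map_inter]

def montyEvent (x₀ : α) (m k r : ℕ) : Finset (Finset α × Finset α) :=
  (univ.powersetCard m ×ˢ (univ.erase x₀).powersetCard k).filter fun p => #(p.1 ∩ p.2) = r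

theorem sum_card_inter_montyEvent (x₀ : α) (m k r : ℕ) (C : Finset α → Finset α)
    (hC : ∀ B, x₀ ∉ B → ∀ x ∈ C B, x ∉ B) :
    ∑ p ∈ montyEvent x₀ m k r, #(C p.2 ∩ p.1) =
      ∑ p ∈ montyEvent x₀ m k r with x₀ ∈ p.1, #(C p.2) := by
  conv_rhs => rw [sum_filter]
  rw [montyEvent, sum_filter_product_eq_sum_sum, sum_filter_product_eq_sum_sum]
  refine sum_congr rfl fun B hB => ?_
  have hx₀ : x₀ ∉ B := fun h => by simpa using (mem_powersetCard.1 hB).1 h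
  dsimp only
  rw [← sum_filter, sum_const, smul_eq_mul, mul_comm]
  exact sum_card_inter_eq_card_mul fun x hx =>
    map_mem_filter_card_inter_iff (map_swap_eq_self (hC B hx₀ x hx) hx₀) m r

theorem mem_montyEvent {x₀ : α} {m k r : ℕ} {p : Finset α × Finset α} :
    p ∈ montyEvent x₀ m k r ↔
      #p.1 = m ∧ (p.2 ⊆ univ.erase x₀ ∧ #p.2 = k) ∧ #(p.1 ∩ p.2) = r := by
  simp [montyEvent, mem_powersetCard, and_assoc]

theorem card_compl_mul_card_filter_mem_montyEvent (x₀ : α) (m k r : ℕ) :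
    (Fintype.card α - k) * #{p ∈ montyEvent x₀ m k r | x₀ ∈ p.1} =
      (m - r) * #(montyEvent x₀ m k r) := by
  have key := sum_card_inter_montyEvent x₀ m k r compl fun B _ x hx => mem_compl.1 hx
  have hunopened : ∀ p ∈ montyEvent x₀ m k r, #(p.2ᶜ ∩ p.1) = m - r := fun p hp => by
    obtain ⟨hm, -, hr⟩ := mem_montyEvent.1 hp
    rw [inter_comm, ← sdiff_eq_inter_compl, card_sdiff, inter_comm, hm, hr]
  have hclosed : ∀ p ∈ montyEvent x₀ m k r, #p.2ᶜ = Fintype.card α - k := fun p hp => by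
    obtain ⟨-, ⟨-, hk⟩, -⟩ := mem_montyEvent.1 hp
    rw [card_compl, hk]
  rw [sum_congr rfl hunopened, sum_congr rfl fun p hp => hclosed p (mem_filter.1 hp).1,
    sum_const, sum_const, smul_eq_mul, smul_eq_mul] at key
  linarith

theorem sum_card_sdiff_insert_montyEvent (x₀ : α) (m k r : ℕ) :
    ∑ p ∈ montyEvent x₀ m k r, #(p.1 \ insert x₀ p.2) =
      (Fintype.card α - k - 1) * #{p ∈ montyEvent x₀ m k r | x₀ ∈ p.1} := by
  have key := sum_card_inter_montyEvent x₀ m k r (fun B => (insert x₀ B)ᶜ)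
    fun B _ x hx hxB => mem_compl.1 hx (mem_insert_of_mem hxB)
  simp only [inter_comm _ (_ : Finset α), ← sdiff_eq_inter_compl] at key
  rw [key, sum_congr rfl fun p hp => ?_, sum_const, smul_eq_mul, mul_comm]
  obtain ⟨-, ⟨hx₀, hk⟩, -⟩ := mem_montyEvent.1 (mem_filter.1 hp).1
  rw [card_compl, card_insert_of_notMem fun h => by simpa using hx₀ h, hk, Nat.sub_sub]

/-- Random-host generalized Monty Hall: the sample space consists of pairs
`(A, B)` where `A` is a uniformly random `m`-subset of the `N` doors (the prize
configuration) and `B` is an independent uniformly random `k`-subset of the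
doors other than the contestant's door `0` (the doors opened by the host).
Conditioned on the event `E` that exactly `r` of the opened doors contain
prizes, the probability of winning by staying (door `0` has a prize) equals the
probability of winning by switching (a uniformly chosen unopened door other
than door `0` has a prize); both equal `(m - r) / (N - k)`. -/
theorem stmt_5 (N m k r : ℕ) (hN : 0 < N) (hswitch : 1 ≤ N - k - 1)
    (hE : (((univ.powersetCard m : Finset (Finset (Fin N))) ×ˢ
        ((univ.erase (⟨0, hN⟩ : Fin N)).powersetCard k)).filter
        (fun p => (p.1 ∩ p.2).card = r)).Nonempty) :
    ((((((univ.powersetCard m : Finset (Finset (Fin N))) ×ˢ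
          ((univ.erase (⟨0, hN⟩ : Fin N)).powersetCard k)).filter
          (fun p => (p.1 ∩ p.2).card = r)).filter
          (fun p => (⟨0, hN⟩ : Fin N) ∈ p.1)).card : ℚ)
        / (((((univ.powersetCard m : Finset (Finset (Fin N))) ×ˢ
          ((univ.erase (⟨0, hN⟩ : Fin N)).powersetCard k)).filter
          (fun p => (p.1 ∩ p.2).card = r)).card : ℚ))
      = ((m : ℚ) - r) / ((N : ℚ) - k))
    ∧ ((∑ p ∈ (((univ.powersetCard m : Finset (Finset (Fin N))) ×ˢ
          ((univ.erase (⟨0, hN⟩ : Fin N)).powersetCard k)).filter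
          (fun p => (p.1 ∩ p.2).card = r)),
          ((p.1 \ insert (⟨0, hN⟩ : Fin N) p.2).card : ℚ) / ((N : ℚ) - k - 1))
        / (((((univ.powersetCard m : Finset (Finset (Fin N))) ×ˢ
          ((univ.erase (⟨0, hN⟩ : Fin N)).powersetCard k)).filter
          (fun p => (p.1 ∩ p.2).card = r)).card : ℚ))
      = ((m : ℚ) - r) / ((N : ℚ) - k)) := by
  set x₀ : Fin N := ⟨0, hN⟩
  rw [← montyEvent.eq_1] at hE ⊢
  set E := montyEvent x₀ m k r
  obtain ⟨p₀, hp₀⟩ := hE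
  have hrm : r ≤ m := by
    obtain ⟨hm, -, hr⟩ := mem_montyEvent.1 hp₀
    exact hr ▸ hm ▸ card_le_card inter_subset_left
  have hE₀ : (#E : ℚ) ≠ 0 := Nat.cast_ne_zero.2 (card_ne_zero_of_mem hp₀)
  have hkN : (k : ℚ) + 2 ≤ N := by exact_mod_cast (by omega : k + 2 ≤ N)
  have hstay : ((N : ℚ) - k) * #{p ∈ E | x₀ ∈ p.1} = (m - r) * #E := by
    have := card_compl_mul_card_filter_mem_montyEvent x₀ m k r
    rw [Fintype.card_fin] at this
    rw [← Nat.cast_sub (by omega : k ≤ N), ← Nat.cast_sub hrm]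
    exact_mod_cast this
  have hsum :
      ∑ p ∈ E, (#(p.1 \ insert x₀ p.2) : ℚ) = (N - k - 1) * #{p ∈ E | x₀ ∈ p.1} := by
    have := sum_card_sdiff_insert_montyEvent x₀ m k r
    rw [Fintype.card_fin, Nat.sub_sub] at this
    rw [sub_sub, ← Nat.cast_one, ← Nat.cast_add, ← Nat.cast_sub (by omega : k + 1 ≤ N)]
    exact_mod_cast this
  refine ⟨?_, ?_⟩
  · rw [div_eq_div_iff hE₀ (by linarith)]
    linarith
  · rw [← sum_div, hsum, mul_div_cancel_left₀ _ (by linarith),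
      div_eq_div_iff hE₀ (by linarith)]
    linarith
end

section
/- In the random-host generalized Monty Hall model on a finite probability space, conditioned on the event E that the host's k randomly opened doors contain exactly r prizes, every unopened door (including the contestant's) has conditional probability exactly (m-r)/(N-k) of containing a prize. -/
open Finset

lemma aux_count {α : Type*} [DecidableEq α] (s B : Finset α) (hB : B ⊆ s) (m r : ℕ)
    (hrm : r ≤ m) :
    ((s.powersetCard m).filter (fun A => (A ∩ B).card = r)).card
      = B.card.choose r * (s.card - B.card).choose (m - r) := by
  rw [← card_sdiff_of_subset hB, ← card_powersetCard, ← card_powersetCard, ← card_product]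
  apply card_bij' (fun A _ => (A ∩ B, A \ B)) (fun p _ => p.1 ∪ p.2)
  · intro A hA
    simp only [mem_filter, mem_powersetCard] at hA
    obtain ⟨⟨hAs, hAm⟩, hAr⟩ := hA
    simp only [mem_product, mem_powersetCard]
    refine ⟨⟨inter_subset_right, hAr⟩, sdiff_subset_sdiff hAs le_rfl, ?_⟩
    have := card_inter_add_card_sdiff A B
    omega
  · intro p hp
    simp only [mem_product, mem_powersetCard] at hp
    obtain ⟨⟨h1B, h1r⟩, h2sB, h2c⟩ := hp
    have hdisj : Disjoint p.1 p.2 := disjoint_sdiff.mono h1B h2sB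
    simp only [mem_filter, mem_powersetCard]
    have h2B : Disjoint p.2 B := sdiff_disjoint.mono_left h2sB
    refine ⟨⟨union_subset (h1B.trans hB) (h2sB.trans sdiff_subset), ?_⟩, ?_⟩
    · rw [card_union_of_disjoint hdisj, h1r, h2c]; omega
    · rw [union_inter_distrib_right, inter_eq_left.2 h1B, (disjoint_iff_inter_eq_empty.1 h2B), union_empty, h1r]
  · intro A hA
    rw [union_comm]; exact sdiff_union_inter A B
  · intro p hp
    simp only [mem_product, mem_powersetCard] at hp
    obtain ⟨⟨h1B, h1r⟩, h2sB, h2c⟩ := hp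
    have h2B : Disjoint p.2 B := sdiff_disjoint.mono_left h2sB
    have e1 : (p.1 ∪ p.2) ∩ B = p.1 := by
      rw [union_inter_distrib_right, inter_eq_left.2 h1B, (disjoint_iff_inter_eq_empty.1 h2B), union_empty]
    have e2 : (p.1 ∪ p.2) \ B = p.2 := by
      rw [union_sdiff_distrib, sdiff_eq_empty_iff_subset.2 h1B, h2B.sdiff_eq_left, empty_union]
    simp [e1, e2]

lemma aux_num {α : Type*} [DecidableEq α] (s B : Finset α) (d : α) (hds : d ∈ s)
    (hdB : d ∉ B) (m r : ℕ) (hm : 1 ≤ m) :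
    (((s.powersetCard m).filter (fun A => (A ∩ B).card = r)).filter
        (fun A => d ∈ A)).card
      = (((s.erase d).powersetCard (m - 1)).filter (fun A => (A ∩ B).card = r)).card := by
  have hi : ∀ A ∈ ((s.powersetCard m).filter (fun A => (A ∩ B).card = r)).filter
      (fun A => d ∈ A),
      A.erase d ∈ ((s.erase d).powersetCard (m - 1)).filter (fun A => (A ∩ B).card = r) := by
    intro A hA
    simp only [mem_filter, mem_powersetCard] at hA ⊢
    obtain ⟨⟨⟨hAs, hAm⟩, hAr⟩, hdA⟩ := hA
    refine ⟨⟨fun x hx => ?_, ?_⟩, ?_⟩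
    · rw [mem_erase] at hx ⊢
      exact ⟨hx.1, hAs hx.2⟩
    · rw [card_erase_of_mem hdA, hAm]
    · rw [erase_inter, erase_eq_of_notMem (by simp [hdB]), hAr]
  have hj : ∀ A ∈ ((s.erase d).powersetCard (m - 1)).filter (fun A => (A ∩ B).card = r),
      insert d A ∈ ((s.powersetCard m).filter (fun A => (A ∩ B).card = r)).filter
        (fun A => d ∈ A) := by
    intro A hA
    simp only [mem_filter, mem_powersetCard] at hA ⊢
    obtain ⟨⟨hAs, hAm⟩, hAr⟩ := hA
    have hdA : d ∉ A := fun h => (mem_erase.1 (hAs h)).1 rfl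
    refine ⟨⟨⟨insert_subset hds (fun x hx => (mem_erase.1 (hAs hx)).2), ?_⟩, ?_⟩,
      mem_insert_self d A⟩
    · rw [card_insert_of_notMem hdA, hAm]; omega
    · rw [insert_inter_of_notMem hdB, hAr]
  refine card_bij' (fun A _ => A.erase d) (fun A _ => insert d A) hi hj ?_ ?_
  · intro A hA
    simp only [mem_filter] at hA
    exact insert_erase hA.2
  · intro A hA
    simp only [mem_filter, mem_powersetCard] at hA
    exact erase_insert (fun h => (mem_erase.1 (hA.1.1 h)).1 rfl)

/-- Random-host generalized Monty Hall: prize configuration uniform over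
`m`-subsets of the `N` doors, contestant's door is `0`, the host's opened set
`B` is a `k`-subset of the other doors, `E` is the event that exactly `r` of
the opened doors contain prizes.  Conditioned on `E`, every unopened door `d`
(including the contestant's door `0`) contains a prize with probability
`(m - r) / (N - k)`. -/
theorem stmt_18 (N m k r : ℕ) (hN : 0 < N)
    (B : Finset (Fin N)) (hBcard : B.card = k) (hB0 : (⟨0, hN⟩ : Fin N) ∉ B)
    (d : Fin N) (hd : d ∉ B)
    (hE : ((univ.powersetCard m : Finset (Finset (Fin N))).filter
        (fun A => (A ∩ B).card = r)).Nonempty) :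
    ((((univ.powersetCard m : Finset (Finset (Fin N))).filter
          (fun A => (A ∩ B).card = r)).filter (fun A => d ∈ A)).card : ℚ)
      / (((univ.powersetCard m : Finset (Finset (Fin N))).filter
          (fun A => (A ∩ B).card = r)).card : ℚ)
    = ((m : ℚ) - r) / ((N : ℚ) - k) := by
  obtain ⟨A0, hA0⟩ := hE
  simp only [mem_filter, mem_powersetCard] at hA0
  obtain ⟨⟨hA0u, hA0m⟩, hA0r⟩ := hA0
  have hrm : r ≤ m := by
    rw [← hA0m, ← hA0r]; exact card_le_card inter_subset_left
  have hrk : r ≤ k := by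
    rw [← hBcard, ← hA0r]; exact card_le_card inter_subset_right
  have hmN : m ≤ N := by
    rw [← hA0m]; simpa using card_le_card hA0u
  have hkN : k < N := by
    rw [← hBcard]
    have : B ⊂ univ := ssubset_univ_iff.2 (fun h => hd (h ▸ mem_univ d))
    simpa using card_lt_card this
  have hmrNk : m - r ≤ N - k := by
    have : A0 \ B ⊆ univ \ B := sdiff_subset_sdiff (subset_univ A0) le_rfl
    have h2 := card_le_card this
    rw [card_sdiff_of_subset (subset_univ B)] at h2
    have h3 := card_inter_add_card_sdiff A0 B
    simp only [card_univ, Fintype.card_fin, hBcard] at h2 h3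
    omega
  have hden : ((univ.powersetCard m : Finset (Finset (Fin N))).filter
      (fun A => (A ∩ B).card = r)).card = k.choose r * (N - k).choose (m - r) := by
    rw [aux_count univ B (subset_univ B) m r hrm, hBcard, card_univ, Fintype.card_fin]
  have hb : 0 < k.choose r * (N - k).choose (m - r) :=
    Nat.mul_pos (Nat.choose_pos hrk) (Nat.choose_pos hmrNk)
  rcases eq_or_lt_of_le hrm with heq | hlt
  · -- r = m : numerator is zero and RHS numerator is zero
    have hnum : (((univ.powersetCard m : Finset (Finset (Fin N))).filter
        (fun A => (A ∩ B).card = r)).filter (fun A => d ∈ A)) = ∅ := by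
      rw [eq_empty_iff_forall_notMem]
      intro A hA
      simp only [mem_filter, mem_powersetCard] at hA
      obtain ⟨⟨⟨hAs, hAm⟩, hAr⟩, hdA⟩ := hA
      have : A ∩ B = A := eq_of_subset_of_card_le inter_subset_left (by omega)
      have hdAB : d ∈ A ∩ B := by rw [this]; exact hdA
      exact hd (mem_inter.1 hdAB).2
    rw [hnum, ← heq]
    simp
  · -- r < m
    have hB' : B ⊆ (univ : Finset (Fin N)).erase d := by
      intro x hx
      rw [mem_erase]
      exact ⟨fun h => hd (h ▸ hx), mem_univ x⟩
    have hnum : (((univ.powersetCard m : Finset (Finset (Fin N))).filter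
        (fun A => (A ∩ B).card = r)).filter (fun A => d ∈ A)).card
        = k.choose r * (N - 1 - k).choose (m - 1 - r) := by
      rw [aux_num univ B d (mem_univ d) hd m r (by omega),
        aux_count ((univ : Finset (Fin N)).erase d) B hB' (m - 1) r (by omega),
        hBcard, card_erase_of_mem (mem_univ d), card_univ, Fintype.card_fin]
    rw [hnum, hden]
    have key : (N - k) * ((N - 1 - k).choose (m - 1 - r))
        = (N - k).choose (m - r) * (m - r) := by
      have e1 : N - 1 - k = N - k - 1 := by omega
      have e2 : m - 1 - r = m - r - 1 := by omega
      have e3 : N - k = Nat.succ (N - k - 1) := by omega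
      have e4 : m - r = (m - r - 1) + 1 := by omega
      rw [e1, e2]
      calc (N - k) * (N - k - 1).choose (m - r - 1)
          = Nat.succ (N - k - 1) * (N - k - 1).choose (m - r - 1) := by rw [← e3]
        _ = (N - k - 1 + 1).choose (m - r - 1 + 1) * (m - r - 1 + 1) :=
            Nat.add_one_mul_choose_eq (N - k - 1) (m - r - 1)
        _ = (N - k).choose (m - r) * (m - r) := by
            rw [← e4]
            have e5 : N - k - 1 + 1 = N - k := by omega
            rw [e5]
    have em : (m : ℚ) - r = ((m - r : ℕ) : ℚ) := by
      rw [Nat.cast_sub hrm]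
    have eN : (N : ℚ) - k = ((N - k : ℕ) : ℚ) := by
      rw [Nat.cast_sub hkN.le]
    rw [em, eN, div_eq_div_iff (by exact_mod_cast hb.ne') (by
      have : 0 < N - k := by omega
      exact_mod_cast this.ne')]
    have hnat : k.choose r * (N - 1 - k).choose (m - 1 - r) * (N - k)
        = (m - r) * (k.choose r * (N - k).choose (m - r)) := by
      rw [mul_assoc, mul_comm ((N - 1 - k).choose (m - 1 - r)) (N - k), key]
      ring
    exact_mod_cast hnat
end
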